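/- Let N ≥ 2, let G be an N×N symmetric positive semidefinite real matrix with G e = 0 and such that uᵀGu = 0 implies u is a scalar multiple of e, let σ ∈ (0, 1], and let f : ℝ^N → ℝ be differentiable, attain its minimum value f* over S, and satisfy f(x) ≥ f(y) + ⟨∇f(y), x − y⟩ + (σ/2) (‖x − y‖*_G)² for all x, y ∈ S. Let (Ω, 𝓕, μ) be a probability space with a filtration (𝓕_k)_{k≥0}, let x⁰ ∈ S, and let (X_k)_{k≥0} be an adapted sequence of ℝ^N-valued random variables with X_0 = x⁰ almost surely, each f(X_k) integrable, and, almost surely for every k: X_k ∈ S and E[f(X_{k+1}) | 𝓕_k] ≤ f(X_k) − (1/2) ∇f(X_k)ᵀ G ∇f(X_k). Then for every k ≥ 0, E[f(X_k)] − f* ≤ (1 − σ)^k (f(x⁰) − f*). -/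

import Mathlib

open MeasureTheory

/-- The gradient of `f : (Fin N → ℝ) → ℝ` at `x`, as a vector. -/
noncomputable def gradVec (N : ℕ) (f : (Fin N → ℝ) → ℝ) (x : Fin N → ℝ) :
    Fin N → ℝ :=
  fun i => fderiv ℝ f x (Pi.single i 1)

/-!
Strong convexity in the dual norm gives the Polyak–Łojasiewicz inequality
`σ (f y - f*) ≤ ½ ∇f(y)ᵀ G ∇f(y)` on `S`: the Cauchy–Schwarz inequality
`⟨z, u⟩ ≤ ‖z‖*_G √(uᵀGu)` bounds the linear term of the strong convexity inequality at `(x*, y)`,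
and maximising `s ↦ t s - σ s² / 2` over `s` leaves `t² / (2σ)`. Inserted into the expected
descent and integrated, it contracts `E f(X_k) - f*` by `1 - σ` at every step.

The dual norm is finite on `S` because `ker G ⊆ ℝ e` is orthogonal to `S`, so every `z ∈ S` is
`G w` for some `w`, and then `⟨z, u⟩ = wᵀGu ≤ (wᵀGw + uᵀGu) / 2`.
-/

open Matrix

namespace Matrix

theorem PosSemidef.isSymm {n : Type*} {A : Matrix n n ℝ} (hA : A.PosSemidef) : A.IsSymm :=
  isHermitian_iff_isSymm.1 hA.isHermitian

variable {K m n : Type*} [Fintype m] [Fintype n]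

theorem exists_vecMul_eq_of_forall_mulVec_eq_zero [Field K] [DecidableEq m] [DecidableEq n]
    (A : Matrix m n K) {z : n → K} (hz : ∀ u, A *ᵥ u = 0 → z ⬝ᵥ u = 0) :
    ∃ w, w ᵥ* A = z := by
  have hmem : dotProductEquiv K n z ∈ (LinearMap.ker A.mulVecLin).dualAnnihilator :=
    (Submodule.mem_dualAnnihilator _).2 hz
  rw [← LinearMap.range_dualMap_eq_dualAnnihilator_ker] at hmem
  obtain ⟨ψ, hψ⟩ := hmem
  refine ⟨(dotProductEquiv K m).symm ψ,
    (dotProductEquiv K n).injective (LinearMap.ext fun u => ?_)⟩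
  rw [← LinearMap.congr_fun hψ u, LinearMap.dualMap_apply, dotProductEquiv_apply_apply,
    mulVecLin_apply, ← dotProduct_mulVec]
  exact LinearMap.congr_fun ((dotProductEquiv K m).apply_symm_apply ψ) _

theorem sum_sum_mul_eq_dotProduct_mulVec [NonUnitalCommSemiring K] (A : Matrix n n K)
    (u : n → K) :
    ∑ i, ∑ j, u i * A i j * u j = u ⬝ᵥ A *ᵥ u := by
  simp [dotProduct, mulVec, Finset.mul_sum, mul_assoc]

theorem IsSymm.dotProduct_mulVec_comm [CommSemiring K] {A : Matrix n n K} (hA : A.IsSymm)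
    (u v : n → K) :
    u ⬝ᵥ A *ᵥ v = v ⬝ᵥ A *ᵥ u := by
  rw [dotProduct_mulVec, dotProduct_comm, ← mulVec_transpose, hA.eq]

end Matrix

section DualNorm

variable {n : Type*} [Fintype n] {G : Matrix n n ℝ}

/-- `‖z‖*_G`. Since `sSup` of a set that is not bounded above is `0`, this is only meaningful
once `bddAbove_dualNorm_set` applies. -/
noncomputable def dualNorm (G : Matrix n n ℝ) (z : n → ℝ) : ℝ :=
  sSup {r | ∃ u, u ⬝ᵥ G *ᵥ u ≤ 1 ∧ r = z ⬝ᵥ u}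

theorem Matrix.PosSemidef.dotProduct_mulVec_self_nonneg (hG : G.PosSemidef) (u : n → ℝ) :
    0 ≤ u ⬝ᵥ G *ᵥ u := by
  simpa using hG.dotProduct_mulVec_nonneg u

variable (hG : G.PosSemidef) (hker : ∀ u, u ⬝ᵥ G *ᵥ u = 0 → ∃ c : ℝ, u = fun _ => c)
include hG hker

theorem exists_mulVec_eq_of_sum_eq_zero {z : n → ℝ} (hz : ∑ i, z i = 0) :
    ∃ w, G *ᵥ w = z := by
  classical
  obtain ⟨w, hw⟩ := G.exists_vecMul_eq_of_forall_mulVec_eq_zero (z := z) fun u hu => by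
    obtain ⟨c, rfl⟩ := hker u (by rw [hu, dotProduct_zero])
    simp [dotProduct, ← Finset.sum_mul, hz]
  exact ⟨w, by rw [← hw, ← mulVec_transpose, hG.isSymm.eq]⟩

theorem bddAbove_dualNorm_set {z : n → ℝ} (hz : ∑ i, z i = 0) :
    BddAbove {r | ∃ u, u ⬝ᵥ G *ᵥ u ≤ 1 ∧ r = z ⬝ᵥ u} := by
  obtain ⟨w, rfl⟩ := exists_mulVec_eq_of_sum_eq_zero hG hker hz
  refine ⟨(w ⬝ᵥ G *ᵥ w + 1) / 2, ?_⟩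
  rintro _ ⟨u, hu, rfl⟩
  have hdiff := hG.dotProduct_mulVec_self_nonneg (w - u)
  simp only [mulVec_sub, dotProduct_sub, sub_dotProduct] at hdiff
  rw [dotProduct_comm]
  linarith [hG.isSymm.dotProduct_mulVec_comm u w]

theorem dotProduct_le_dualNorm_mul_sqrt {z : n → ℝ} (hz : ∑ i, z i = 0) (u : n → ℝ) :
    z ⬝ᵥ u ≤ dualNorm G z * √(u ⬝ᵥ G *ᵥ u) := by
  have hbdd := bddAbove_dualNorm_set hG hker hz
  rcases (hG.dotProduct_mulVec_self_nonneg u).eq_or_lt with hu | hu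
  · obtain ⟨c, rfl⟩ := hker _ hu.symm
    rw [← hu]
    simp [dotProduct, ← Finset.sum_mul, hz]
  · set t := √(u ⬝ᵥ G *ᵥ u)
    have ht : 0 < t := Real.sqrt_pos.2 hu
    have hnorm : t⁻¹ • u ⬝ᵥ G *ᵥ (t⁻¹ • u) = 1 := by
      have ht2 : t ^ 2 = u ⬝ᵥ G *ᵥ u := Real.sq_sqrt hu.le
      rw [mulVec_smul, dotProduct_smul, smul_dotProduct, smul_eq_mul, smul_eq_mul, ← ht2]
      field_simp
    have hle : z ⬝ᵥ t⁻¹ • u ≤ dualNorm G z := le_csSup hbdd ⟨t⁻¹ • u, hnorm.le, rfl⟩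
    rw [dotProduct_smul, smul_eq_mul, inv_mul_le_iff₀ ht] at hle
    linarith

end DualNorm

theorem fderiv_apply_eq_dotProduct_gradVec {N : ℕ} (f : (Fin N → ℝ) → ℝ) (x v : Fin N → ℝ) :
    fderiv ℝ f x v = v ⬝ᵥ gradVec N f x := by
  have hgrad : gradVec N f x =
      (dotProductEquiv ℝ (Fin N)).symm (fderiv ℝ f x : Module.Dual ℝ (Fin N → ℝ)) := rfl
  rw [dotProduct_comm, hgrad]
  exact (LinearMap.congr_fun ((dotProductEquiv ℝ (Fin N)).apply_symm_apply _) v).symm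

theorem polyakLojasiewicz_of_strongConvex {N : ℕ} {G : Matrix (Fin N) (Fin N) ℝ}
    (hG : G.PosSemidef) (hker : ∀ u, u ⬝ᵥ G *ᵥ u = 0 → ∃ c : ℝ, u = fun _ => c)
    {σ : ℝ} (hσ : 0 < σ) {f : (Fin N → ℝ) → ℝ} {x y : Fin N → ℝ}
    (hx : ∑ i, x i = 0) (hy : ∑ i, y i = 0)
    (hsc : f y + fderiv ℝ f y (x - y) + σ / 2 * dualNorm G (x - y) ^ 2 ≤ f x) :
    σ * (f y - f x) ≤ 1 / 2 * (gradVec N f y ⬝ᵥ G *ᵥ gradVec N f y) := by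
  set g := gradVec N f y
  have hxy : ∑ i, (x - y) i = 0 := by simp [Finset.sum_sub_distrib, hx, hy]
  have hcs := dotProduct_le_dualNorm_mul_sqrt hG hker hxy (-g)
  simp only [mulVec_neg, dotProduct_neg, neg_dotProduct, neg_neg] at hcs
  rw [fderiv_apply_eq_dotProduct_gradVec] at hsc
  have hsq := Real.sq_sqrt (hG.dotProduct_mulVec_self_nonneg g)
  nlinarith [sq_nonneg (σ * dualNorm G (x - y) - √(g ⬝ᵥ G *ᵥ g))]

theorem integral_le_of_condExp_le {Ω : Type*} {m m₀ : MeasurableSpace Ω} {μ : Measure Ω}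
    (hm : m ≤ m₀) [SigmaFinite (μ.trim hm)] {Y Z : Ω → ℝ} (hZ : Integrable Z μ)
    (h : μ[Y | m] ≤ᵐ[μ] Z) : ∫ ω, Y ω ∂μ ≤ ∫ ω, Z ω ∂μ :=
  (integral_condExp hm).symm.trans_le (integral_mono_ae integrable_condExp hZ h)

theorem stmt_12_general (N : ℕ) (G : Matrix (Fin N) (Fin N) ℝ)
    (hpsd : G.PosSemidef)
    (hker : ∀ u : Fin N → ℝ, (∑ i, ∑ j, u i * G i j * u j) = 0 →
      ∃ c : ℝ, u = fun _ => c)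
    (σ : ℝ) (hσ0 : 0 < σ) (hσ1 : σ ≤ 1)
    (f : (Fin N → ℝ) → ℝ)
    (fstar : ℝ)
    (hattain : ∃ xs : Fin N → ℝ, (∑ i, xs i = 0) ∧ f xs = fstar ∧
      ∀ x : Fin N → ℝ, (∑ i, x i = 0) → fstar ≤ f x)
    (hsc : ∀ x y : Fin N → ℝ, (∑ i, x i = 0) → (∑ i, y i = 0) →
      f y + fderiv ℝ f y (x - y) + (σ / 2) *
        (sSup {r : ℝ | ∃ u : Fin N → ℝ,
          (∑ i, ∑ j, u i * G i j * u j) ≤ 1 ∧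
            r = ∑ i, (x i - y i) * u i}) ^ 2 ≤ f x)
    {Ω : Type} [MeasurableSpace Ω] (μ : Measure Ω) [IsProbabilityMeasure μ]
    (𝓕 : Filtration ℕ ‹MeasurableSpace Ω›)
    (x0 : Fin N → ℝ)
    (X : ℕ → Ω → (Fin N → ℝ))
    (hX0 : ∀ᵐ ω ∂μ, X 0 ω = x0)
    (hint : ∀ k, Integrable (fun ω => f (X k ω)) μ)
    (hfeas : ∀ k, ∀ᵐ ω ∂μ, ∑ i, X k ω i = 0)
    (hexp : ∀ k, ∀ᵐ ω ∂μ,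
      (μ[(fun ω' => f (X (k + 1) ω')) | 𝓕 k]) ω ≤ f (X k ω) -
        (1 / 2) * ∑ i, ∑ j,
          gradVec N f (X k ω) i * G i j * gradVec N f (X k ω) j) :
    ∀ k : ℕ, (∫ ω, f (X k ω) ∂μ) - fstar ≤ (1 - σ) ^ k * (f x0 - fstar) := by
  simp only [sum_sum_mul_eq_dotProduct_mulVec] at hker hsc hexp
  obtain ⟨xs, hxs, rfl, -⟩ := hattain
  have hcontract : ∀ k, μ[fun ω => f (X (k + 1) ω) | 𝓕 k] ≤ᵐ[μ]
      fun ω => (1 - σ) * f (X k ω) + σ * f xs := fun k => by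
    filter_upwards [hexp k, hfeas k] with ω hdesc hXk
    linarith [polyakLojasiewicz_of_strongConvex hpsd hker hσ0 hxs hXk (hsc xs _ hxs hXk)]
  have hstep : ∀ k, (∫ ω, f (X (k + 1) ω) ∂μ) - f xs ≤
      (1 - σ) * ((∫ ω, f (X k ω) ∂μ) - f xs) := fun k => by
    have hint' : Integrable (fun ω => (1 - σ) * f (X k ω) + σ * f xs) μ :=
      ((hint k).const_mul _).add (integrable_const _)
    have hle := integral_le_of_condExp_le (𝓕.le k) hint' (hcontract k)
    rw [integral_add ((hint k).const_mul _) (integrable_const _), integral_const_mul,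
      integral_const, probReal_univ, one_smul] at hle
    linarith
  have hinit : ∫ ω, f (X 0 ω) ∂μ = f x0 := by
    rw [integral_congr_ae (hX0.mono fun ω hω => congrArg f hω), integral_const, probReal_univ,
      one_smul]
  intro k
  simpa [hinit] using le_geom (u := fun k => (∫ ω, f (X k ω) ∂μ) - f xs) (by linarith) k
    fun k _ => hstep k

/-- Linear rate `E[f(X_k)] − f* ≤ (1 − σ)^k (f(x⁰) − f*)` for a
random descent scheme applied to a strongly convex function. -/
theorem stmt_12 (N : ℕ) (hN : 2 ≤ N) (G : Matrix (Fin N) (Fin N) ℝ)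
    (hsym : G.IsSymm) (hpsd : G.PosSemidef)
    (hGe : G.mulVec (fun _ => (1 : ℝ)) = 0)
    (hker : ∀ u : Fin N → ℝ, (∑ i, ∑ j, u i * G i j * u j) = 0 →
      ∃ c : ℝ, u = fun _ => c)
    (σ : ℝ) (hσ0 : 0 < σ) (hσ1 : σ ≤ 1)
    (f : (Fin N → ℝ) → ℝ) (hdiff : Differentiable ℝ f)
    (fstar : ℝ)
    (hattain : ∃ xs : Fin N → ℝ, (∑ i, xs i = 0) ∧ f xs = fstar ∧
      ∀ x : Fin N → ℝ, (∑ i, x i = 0) → fstar ≤ f x)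
    (hsc : ∀ x y : Fin N → ℝ, (∑ i, x i = 0) → (∑ i, y i = 0) →
      f y + fderiv ℝ f y (x - y) + (σ / 2) *
        (sSup {r : ℝ | ∃ u : Fin N → ℝ,
          (∑ i, ∑ j, u i * G i j * u j) ≤ 1 ∧
            r = ∑ i, (x i - y i) * u i}) ^ 2 ≤ f x)
    {Ω : Type} [MeasurableSpace Ω] (μ : Measure Ω) [IsProbabilityMeasure μ]
    (𝓕 : Filtration ℕ ‹MeasurableSpace Ω›)
    (x0 : Fin N → ℝ) (hx0 : ∑ i, x0 i = 0)
    (X : ℕ → Ω → (Fin N → ℝ)) (hadapt : Adapted 𝓕 X)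
    (hX0 : ∀ᵐ ω ∂μ, X 0 ω = x0)
    (hint : ∀ k, Integrable (fun ω => f (X k ω)) μ)
    (hfeas : ∀ k, ∀ᵐ ω ∂μ, ∑ i, X k ω i = 0)
    (hexp : ∀ k, ∀ᵐ ω ∂μ,
      (μ[(fun ω' => f (X (k + 1) ω')) | 𝓕 k]) ω ≤ f (X k ω) -
        (1 / 2) * ∑ i, ∑ j,
          gradVec N f (X k ω) i * G i j * gradVec N f (X k ω) j) :
    ∀ k : ℕ, (∫ ω, f (X k ω) ∂μ) - fstar ≤ (1 - σ) ^ k * (f x0 - fstar) :=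
  stmt_12_general N G hpsd hker σ hσ0 hσ1 f fstar hattain hsc μ 𝓕 x0 X hX0 hint hfeas hexp
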